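/- arXiv:1607.04407 — 4 statements merged into one kernel-verified Lean document; each statement's English description precedes it below -/
import Mathlib

section
/- Theorem 2(1) (existence of the NAS adjusted REML estimator). Fix a real number z and y ∈ ℝ^m. If m > p + (1+z²)/2, then the function f(A) = A^{(1+z²)/4} · L_RE(A), defined for A ∈ (0,∞), attains its supremum on (0,∞): there exists Â > 0 such that f(A) ≤ f(Â) for all A > 0. -/
/-! Writing `V(A) = A • diag(1 + Dᵢ/A)` and scaling out `A` gives
`L_RE(A) = A^{(p-m)/2} · g(1/A)`, where `g(t)` is the likelihood of `diag(1 + t D)` with the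
quadratic form weighted by `t`; `g` is continuous at `t = 0` because `XᵀX` is invertible. So
`A^{(1+z²)/4} L_RE(A)` tends to `0` at `∞` since `m > p + (1+z²)/2`. It also vanishes at `A = 0`,
where `L_RE` is still continuous since all `Dᵢ > 0`, and it is positive in between, so the extreme
value theorem on `[0, ∞)` gives a maximiser in `(0, ∞)`. -/

open Matrix Real Filter

/-- The diagonal covariance matrix `V(A) = diag(A + D₁, …, A + D_m)`. -/
noncomputable def Vmat {m : ℕ} (D : Fin m → ℝ) (A : ℝ) : Matrix (Fin m) (Fin m) ℝ :=
  Matrix.diagonal (fun i => A + D i)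

/-- The residual projection matrix `P(A) = V⁻¹ − V⁻¹X(XᵀV⁻¹X)⁻¹XᵀV⁻¹`. -/
noncomputable def Pmat {m p : ℕ} (X : Matrix (Fin m) (Fin p) ℝ) (D : Fin m → ℝ) (A : ℝ) :
    Matrix (Fin m) (Fin m) ℝ :=
  (Vmat D A)⁻¹ - (Vmat D A)⁻¹ * X * (Xᵀ * (Vmat D A)⁻¹ * X)⁻¹ * Xᵀ * (Vmat D A)⁻¹

/-- The residual likelihood
`L_RE(A) = det(XᵀV⁻¹X)^{−1/2} · det(V)^{−1/2} · exp(−yᵀP y/2)`. -/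
noncomputable def LRE {m p : ℕ} (X : Matrix (Fin m) (Fin p) ℝ) (D : Fin m → ℝ)
    (y : Fin m → ℝ) (A : ℝ) : ℝ :=
  (Xᵀ * (Vmat D A)⁻¹ * X).det ^ (-(1 : ℝ) / 2) * (Vmat D A).det ^ (-(1 : ℝ) / 2) *
    Real.exp (-(y ⬝ᵥ (Pmat X D A *ᵥ y)) / 2)

open Topology Set

theorem Matrix.mulVec_injective_of_rank_eq {n k : Type*} [Fintype n] [Fintype k]
    {X : Matrix n k ℝ} (hX : X.rank = Fintype.card k) : Function.Injective X.mulVec :=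
  mulVec_injective_iff.mpr <| linearIndependent_iff_card_eq_finrank_span.mpr <| by
    rw [Set.finrank, ← rank_eq_finrank_span_cols, hX]

theorem Matrix.PosDef.transpose_mul_inv_mul_same {n k : Type*} [Fintype n] [Fintype k]
    [DecidableEq n] {X : Matrix n k ℝ} (hX : Function.Injective X.mulVec) {V : Matrix n n ℝ}
    (hV : V.PosDef) : (Xᵀ * V⁻¹ * X).PosDef := by
  simpa using hV.inv.conjTranspose_mul_mul_same hX

theorem Matrix.inv_smul_of_det_ne_zero {n : Type*} [Fintype n] [DecidableEq n] {c : ℝ}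
    (hc : c ≠ 0) {M : Matrix n n ℝ} (hM : M.det ≠ 0) : (c • M)⁻¹ = c⁻¹ • M⁻¹ :=
  inv_eq_left_inv <| by
    rw [Matrix.smul_mul, Matrix.mul_smul, smul_smul, inv_mul_cancel₀ hc, one_smul,
      nonsing_inv_mul M hM.isUnit]

theorem ContinuousAt.matrix_inv_of_det_ne_zero {α n : Type*} [TopologicalSpace α] [Fintype n]
    [DecidableEq n] {M : α → Matrix n n ℝ} {x : α} (hM : ContinuousAt M x)
    (hdet : (M x).det ≠ 0) : ContinuousAt (fun t => (M t)⁻¹) x :=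
  (continuousAt_matrix_inv _ (NormedRing.inverse_continuousAt (Units.mk0 _ hdet))).comp hM

theorem exists_isMaxOn_Ioi_of_tendsto_atTop {f : ℝ → ℝ} {c a : ℝ} (hf : ContinuousOn f (Ici c))
    (hlim : Tendsto f atTop (𝓝 (f c))) (ha : c < a) (hfa : f c < f a) :
    ∃ b, c < b ∧ IsMaxOn f (Ioi c) b := by
  have hfar : ∀ᶠ x in cocompact ℝ ⊓ 𝓟 (Ici c), f x ≤ f a := by
    rw [cocompact_eq_atBot_atTop, inf_sup_right, eventually_sup]
    refine ⟨eventually_inf_principal.mpr ?_, ?_⟩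
    · filter_upwards [eventually_lt_atBot c] with x hx hxc using absurd hxc (not_le.mpr hx)
    · exact ((hlim.eventually (gt_mem_nhds hfa)).filter_mono inf_le_left).mono fun _ h => h.le
  obtain ⟨b, hb, hmax⟩ := hf.exists_isMaxOn' isClosed_Ici (mem_Ici.mpr ha.le) hfar
  refine ⟨b, lt_of_le_of_ne hb ?_, hmax.on_subset Ioi_subset_Ici_self⟩
  rintro rfl
  exact (hfa.trans_le (hmax (mem_Ici.mpr ha.le))).false

section ScaledLikelihood

variable {n k : Type*} [Fintype n] [Fintype k] [DecidableEq n] [DecidableEq k]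

/-- `LRE X D y A = scaledLik X y 1 (Vmat D A)`; the weight `s` of the quadratic form absorbs the
rescaling `V ↦ c • V`, which turns `s = 1` into `s = c⁻¹`. -/
noncomputable def scaledLik (X : Matrix n k ℝ) (y : n → ℝ) (s : ℝ) (V : Matrix n n ℝ) : ℝ :=
  (Xᵀ * V⁻¹ * X).det ^ (-(1 : ℝ) / 2) * V.det ^ (-(1 : ℝ) / 2) *
    exp (-(s * (y ⬝ᵥ ((V⁻¹ - V⁻¹ * X * (Xᵀ * V⁻¹ * X)⁻¹ * Xᵀ * V⁻¹) *ᵥ y))) / 2)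

variable {X : Matrix n k ℝ} (y : n → ℝ) (hX : Function.Injective X.mulVec) {V : Matrix n n ℝ}
  (hV : V.PosDef)
include hX hV

theorem scaledLik_pos (s : ℝ) : 0 < scaledLik X y s V :=
  mul_pos (mul_pos (rpow_pos_of_pos (hV.transpose_mul_inv_mul_same hX).det_pos _)
    (rpow_pos_of_pos hV.det_pos _)) (exp_pos _)

theorem continuousAt_scaledLik (s : ℝ) :
    ContinuousAt (Function.uncurry (scaledLik X y)) (s, V) := by
  have hXVX := hV.transpose_mul_inv_mul_same hX
  have hinv : ContinuousAt (fun q : ℝ × Matrix n n ℝ => q.2⁻¹) (s, V) :=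
    continuousAt_snd.matrix_inv_of_det_ne_zero hV.det_pos.ne'
  have hM : ContinuousAt (fun q : ℝ × Matrix n n ℝ => Xᵀ * q.2⁻¹ * X) (s, V) := by fun_prop
  have hMinv := hM.matrix_inv_of_det_ne_zero hXVX.det_pos.ne'
  have hdetM : ContinuousAt (fun q : ℝ × Matrix n n ℝ => (Xᵀ * q.2⁻¹ * X).det) (s, V) := by
    fun_prop
  have hdetV : ContinuousAt (fun q : ℝ × Matrix n n ℝ => q.2.det) (s, V) := by fun_prop
  exact ((hdetM.rpow_const (.inl hXVX.det_pos.ne')).mul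
    (hdetV.rpow_const (.inl hV.det_pos.ne'))).mul (by fun_prop)

theorem scaledLik_one_smul {c : ℝ} (hc : 0 < c) :
    scaledLik X y 1 (c • V) =
      c ^ (((Fintype.card k : ℝ) - Fintype.card n) / 2) * scaledLik X y c⁻¹ V := by
  have hXVX := hV.transpose_mul_inv_mul_same hX
  have hVinv : (c • V)⁻¹ = c⁻¹ • V⁻¹ := inv_smul_of_det_ne_zero hc.ne' hV.det_pos.ne'
  have hM : Xᵀ * (c • V)⁻¹ * X = c⁻¹ • (Xᵀ * V⁻¹ * X) := by
    rw [hVinv, Matrix.mul_smul, Matrix.smul_mul]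
  have hMinv : (Xᵀ * (c • V)⁻¹ * X)⁻¹ = c • (Xᵀ * V⁻¹ * X)⁻¹ := by
    rw [hM, inv_smul_of_det_ne_zero (inv_ne_zero hc.ne') hXVX.det_pos.ne', inv_inv]
  have hP : (c • V)⁻¹ - (c • V)⁻¹ * X * (Xᵀ * (c • V)⁻¹ * X)⁻¹ * Xᵀ * (c • V)⁻¹ =
      c⁻¹ • (V⁻¹ - V⁻¹ * X * (Xᵀ * V⁻¹ * X)⁻¹ * Xᵀ * V⁻¹) := by
    rw [hMinv, hVinv]
    simp only [Matrix.smul_mul, Matrix.mul_smul, smul_smul, smul_sub]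
    rw [show c⁻¹ * (c * c⁻¹) = c⁻¹ by field_simp]
  unfold scaledLik
  rw [hP, hM, det_smul, det_smul, smul_mulVec, dotProduct_smul, smul_eq_mul, one_mul,
    mul_rpow (by positivity) hXVX.det_pos.le, mul_rpow (by positivity) hV.det_pos.le,
    inv_pow, inv_rpow (by positivity), ← rpow_natCast, ← rpow_natCast,
    ← rpow_mul hc.le, ← rpow_mul hc.le, ← rpow_neg hc.le,
    show ((Fintype.card k : ℝ) - Fintype.card n) / 2 =
      -(Fintype.card k * (-1 / 2)) + Fintype.card n * (-1 / 2) by ring, rpow_add hc]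
  ring

end ScaledLikelihood

section Model

variable {m p : ℕ} {X : Matrix (Fin m) (Fin p) ℝ} {D : Fin m → ℝ} (y : Fin m → ℝ)

theorem posDef_Vmat {A : ℝ} (hA : ∀ i, 0 < A + D i) : (Vmat D A).PosDef :=
  posDef_diagonal_iff.mpr hA

theorem LRE_eq_scaledLik (A : ℝ) : LRE X D y A = scaledLik X y 1 (Vmat D A) := by
  simp only [LRE, Pmat, scaledLik, one_mul]

theorem Vmat_eq_smul {A : ℝ} (hA : A ≠ 0) : Vmat D A = A • Vmat (A⁻¹ • D) 1 := by
  rw [Vmat, Vmat, ← diagonal_smul]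
  congr 1
  funext i
  simp only [Pi.smul_apply, smul_eq_mul]
  field_simp

variable (hX : Function.Injective X.mulVec)
include hX

theorem LRE_eq_rpow_mul_scaledLik (hD : ∀ i, 0 < D i) {A : ℝ} (hA : 0 < A) :
    LRE X D y A = A ^ (((p : ℝ) - m) / 2) * scaledLik X y A⁻¹ (Vmat (A⁻¹ • D) 1) := by
  have hV : (Vmat (A⁻¹ • D) 1).PosDef := posDef_Vmat fun i => by
    have := hD i
    simp only [Pi.smul_apply, smul_eq_mul]
    positivity
  rw [LRE_eq_scaledLik, Vmat_eq_smul hA.ne', scaledLik_one_smul y hX hV hA, Fintype.card_fin,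
    Fintype.card_fin]

theorem continuousAt_LRE {A : ℝ} (hA : ∀ i, 0 < A + D i) : ContinuousAt (LRE X D y) A := by
  have hcurve : Continuous fun A : ℝ => ((1 : ℝ), Vmat D A) := by unfold Vmat; fun_prop
  rw [funext (LRE_eq_scaledLik y)]
  exact (continuousAt_scaledLik y hX (posDef_Vmat hA) 1).comp
    (f := fun A : ℝ => ((1 : ℝ), Vmat D A)) hcurve.continuousAt

theorem tendsto_rpow_mul_LRE_atTop (hD : ∀ i, 0 < D i) {α : ℝ} (hα : α + p / 2 < m / 2) :
    Tendsto (fun A => A ^ α * LRE X D y A) atTop (𝓝 0) := by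
  have hV : Tendsto (fun A : ℝ => Vmat (A⁻¹ • D) 1) atTop (𝓝 (Vmat ((0 : ℝ) • D) 1)) := by
    have : Continuous fun t : ℝ => Vmat (t • D) 1 := by unfold Vmat; fun_prop
    exact this.continuousAt.tendsto.comp tendsto_inv_atTop_zero
  have hlik := (continuousAt_scaledLik y hX (posDef_Vmat (by simp)) 0).tendsto.comp
    (tendsto_inv_atTop_zero.prodMk_nhds hV)
  have hpow : Tendsto (fun A : ℝ => A ^ (α + ((p : ℝ) - m) / 2)) atTop (𝓝 0) := by
    simpa using tendsto_rpow_neg_atTop (y := -(α + ((p : ℝ) - m) / 2)) (by linarith)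
  refine (zero_mul (scaledLik X y 0 (Vmat ((0 : ℝ) • D) 1)) ▸ hpow.mul hlik).congr' ?_
  filter_upwards [eventually_gt_atTop 0] with A hA
  rw [LRE_eq_rpow_mul_scaledLik y hX hD hA, ← mul_assoc, ← rpow_add hA]
  rfl

end Model

theorem nas_estimator_exists_general {m p : ℕ}
    (X : Matrix (Fin m) (Fin p) ℝ) (hrank : X.rank = p)
    (D : Fin m → ℝ) (hD : ∀ i, 0 < D i)
    (z : ℝ) (y : Fin m → ℝ)
    (hcond : (m : ℝ) > (p : ℝ) + (1 + z ^ 2) / 2) :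
    ∃ Ahat : ℝ, 0 < Ahat ∧ ∀ A : ℝ, 0 < A →
      A ^ ((1 + z ^ 2) / 4) * LRE X D y A ≤ Ahat ^ ((1 + z ^ 2) / 4) * LRE X D y Ahat := by
  have hX := mulVec_injective_of_rank_eq (by rwa [Fintype.card_fin])
  have hα : 0 < (1 + z ^ 2) / 4 := by positivity
  have hV : ∀ A : ℝ, 0 ≤ A → ∀ i, 0 < A + D i := fun A hA i => by linarith [hD i]
  obtain ⟨Ahat, hAhat, hmax⟩ := exists_isMaxOn_Ioi_of_tendsto_atTop
    (f := fun A => A ^ ((1 + z ^ 2) / 4) * LRE X D y A) (a := 1)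
    (fun A hA => ((continuousAt_rpow_const _ _ (.inr hα.le)).mul
      (continuousAt_LRE y hX (hV A hA))).continuousWithinAt)
    (by simpa [zero_rpow hα.ne'] using tendsto_rpow_mul_LRE_atTop y hX hD (by linarith))
    one_pos
    (by simpa [zero_rpow hα.ne', LRE_eq_scaledLik] using
      scaledLik_pos y hX (posDef_Vmat (hV 1 zero_le_one)) 1)
  exact ⟨Ahat, hAhat, fun A hA => hmax hA⟩

/-- Theorem 2(1): existence of the NAS adjusted REML estimator.  If
`m > p + (1+z²)/2`, then `A ↦ A^{(1+z²)/4}·L_RE(A)` attains its supremum on `(0,∞)`. -/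
theorem nas_estimator_exists {m p : ℕ} (hm : 0 < m) (hp : 0 < p)
    (X : Matrix (Fin m) (Fin p) ℝ) (hrank : X.rank = p)
    (D : Fin m → ℝ) (hD : ∀ i, 0 < D i)
    (z : ℝ) (y : Fin m → ℝ)
    (hcond : (m : ℝ) > (p : ℝ) + (1 + z ^ 2) / 2) :
    ∃ Ahat : ℝ, 0 < Ahat ∧ ∀ A : ℝ, 0 < A →
      A ^ ((1 + z ^ 2) / 4) * LRE X D y A ≤ Ahat ^ ((1 + z ^ 2) / 4) * LRE X D y Ahat :=
  nas_estimator_exists_general X hrank D hD z y hcond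
end

section
/- Theorem 2(2) (uniqueness in the balanced case). Suppose D_i = D > 0 for all i, fix a real number z, let M = I_m − X(XᵀX)⁻¹Xᵀ, and assume m > p + (1+z²)/2. Then there is exactly one A ∈ (0,∞) at which the derivative of the map A ↦ ((1+z²)/4)·log A + log L_RE(A) vanishes, and this A is the unique positive root of the quadratic equation −2(m − p − (1+z²)/2)·A² + 2(yᵀM y − (m − p − 1 − z²)D)·A + (1+z²)D² = 0. -/
open Matrix Real Filter

/-!
In the balanced case `V(A) = (A + D) I`, so `P(A) = M / (A + D)` and
`log L_RE(A) = -log det(XᵀX) / 2 - (m - p)/2 · log (A + D) - yᵀMy / (2(A + D))`.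
Multiplying the derivative of the adjusted log-likelihood by `4A(A + D)² > 0` turns it into the
quadratic of the statement, whose leading coefficient is negative (this is `m > p + (1+z²)/2`)
and whose constant term `(1+z²)D²` is positive; such a quadratic has exactly one positive root.
-/

lemma existsUnique_pos_root_of_neg_of_pos {a b c : ℝ} (ha : a < 0) (hc : 0 < c) :
    ∃! x : ℝ, 0 < x ∧ a * x ^ 2 + b * x + c = 0 := by
  have hdisc : 0 < discrim a b c := by unfold discrim; nlinarith [sq_nonneg b]
  set s := √(discrim a b c)
  have hs : discrim a b c = s * s := (mul_self_sqrt hdisc.le).symm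
  have hbs : -b < s := by
    have : b * b < s * s := by rw [← hs, discrim]; nlinarith
    nlinarith [sqrt_nonneg (discrim a b c)]
  set x₀ := (-b - s) / (2 * a)
  have hx₀ : 0 < x₀ := div_pos_of_neg_of_neg (by linarith) (by linarith)
  have hx₀q : a * x₀ ^ 2 + b * x₀ + c = 0 := by
    linear_combination (quadratic_eq_zero_iff ha.ne hs x₀).mpr (Or.inr rfl)
  refine ⟨x₀, ⟨hx₀, hx₀q⟩, fun x ⟨hx, hxq⟩ => ?_⟩
  -- Vieta: two distinct roots would have product `c / a < 0`.
  have hfactor : (x - x₀) * (a * (x + x₀) + b) = 0 := by linear_combination hxq - hx₀q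
  rcases mul_eq_zero.mp hfactor with h | h
  · linarith
  · have : c = a * x * x₀ := by linear_combination hxq - x * h
    nlinarith [mul_pos hx hx₀]

lemma Matrix.mulVec_injective_of_rank_eq_card {K m n : Type*} [Field K] [Fintype n]
    {X : Matrix m n K} (h : X.rank = Fintype.card n) :
    Function.Injective X.mulVec := by
  have hsum := LinearMap.finrank_range_add_finrank_ker X.mulVecLin
  rw [← Matrix.rank, h, Module.finrank_fintype_fun_eq_card] at hsum
  have hker : LinearMap.ker X.mulVecLin = ⊥ := Submodule.finrank_eq_zero.mp (by omega)
  exact LinearMap.ker_eq_bot.mp hker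

lemma Matrix.det_transpose_mul_self_pos_of_rank_eq_card {m n : Type*} [Fintype m]
    [Fintype n] [DecidableEq n] {X : Matrix m n ℝ} (h : X.rank = Fintype.card n) :
    0 < (Xᵀ * X).det := by
  simpa using (PosDef.conjTranspose_mul_self X (mulVec_injective_of_rank_eq_card h)).det_pos

lemma score_eq_zero_iff_quadratic {A Dv m p z c : ℝ} (hA : 0 < A) (hADv : 0 < A + Dv) :
    (1 + z ^ 2) / 4 * A⁻¹ + (-((m - p) / (2 * (A + Dv))) + c / (2 * (A + Dv) ^ 2)) = 0 ↔
      -2 * (m - p - (1 + z ^ 2) / 2) * A ^ 2 + 2 * (c - (m - p - 1 - z ^ 2) * Dv) * A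
        + (1 + z ^ 2) * Dv ^ 2 = 0 := by
  have hscale : -2 * (m - p - (1 + z ^ 2) / 2) * A ^ 2 + 2 * (c - (m - p - 1 - z ^ 2) * Dv) * A
        + (1 + z ^ 2) * Dv ^ 2 = 4 * A * (A + Dv) ^ 2 *
      ((1 + z ^ 2) / 4 * A⁻¹ + (-((m - p) / (2 * (A + Dv))) + c / (2 * (A + Dv) ^ 2))) := by
    field_simp
    ring
  rw [hscale, mul_eq_zero, or_iff_right (by positivity)]

section Balanced

variable {m p : ℕ} (X : Matrix (Fin m) (Fin p) ℝ) (Dv : ℝ)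

lemma Vmat_const (A : ℝ) : Vmat (fun _ : Fin m => Dv) A = (A + Dv) • 1 := by
  rw [Vmat, smul_one_eq_diagonal]

lemma inv_Vmat_const {A : ℝ} (h : A + Dv ≠ 0) :
    (Vmat (fun _ : Fin m => Dv) A)⁻¹ = (A + Dv)⁻¹ • 1 := by
  rw [Vmat_const]
  refine inv_eq_right_inv ?_
  rw [Matrix.smul_mul, Matrix.mul_smul, one_mul, smul_smul, mul_inv_cancel₀ h, one_smul]

lemma Pmat_const (hX : IsUnit (Xᵀ * X).det) {A : ℝ} (h : A + Dv ≠ 0) :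
    Pmat X (fun _ : Fin m => Dv) A = (A + Dv)⁻¹ • (1 - X * (Xᵀ * X)⁻¹ * Xᵀ) := by
  have hXVX : (Xᵀ * (Vmat (fun _ : Fin m => Dv) A)⁻¹ * X)⁻¹ = (A + Dv) • (Xᵀ * X)⁻¹ := by
    rw [inv_Vmat_const Dv h, Matrix.mul_smul, Matrix.mul_one, Matrix.smul_mul]
    refine inv_eq_right_inv ?_
    rw [Matrix.smul_mul, Matrix.mul_smul, smul_smul, inv_mul_cancel₀ h, one_smul,
      mul_nonsing_inv _ hX]
  unfold Pmat
  rw [hXVX, inv_Vmat_const Dv h]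
  simp only [Matrix.smul_mul, Matrix.mul_smul, Matrix.one_mul, Matrix.mul_one, smul_smul,
    smul_sub, Matrix.mul_assoc]
  congr 2
  field_simp

lemma log_LRE_const (hX : 0 < (Xᵀ * X).det) (y : Fin m → ℝ) {A : ℝ} (h : 0 < A + Dv) :
    log (LRE X (fun _ : Fin m => Dv) y A) = -log (Xᵀ * X).det / 2 - (m - p) / 2 * log (A + Dv)
      - y ⬝ᵥ ((1 - X * (Xᵀ * X)⁻¹ * Xᵀ) *ᵥ y) / (2 * (A + Dv)) := by
  have hdetV : (Vmat (fun _ : Fin m => Dv) A).det = (A + Dv) ^ m := by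
    simp [Vmat_const]
  have hdetXVX :
      (Xᵀ * (Vmat (fun _ : Fin m => Dv) A)⁻¹ * X).det = (A + Dv)⁻¹ ^ p * (Xᵀ * X).det := by
    rw [inv_Vmat_const Dv h.ne', Matrix.mul_smul, Matrix.mul_one, Matrix.smul_mul, det_smul,
      Fintype.card_fin]
  have hquad : y ⬝ᵥ (Pmat X (fun _ : Fin m => Dv) A *ᵥ y) =
      y ⬝ᵥ ((1 - X * (Xᵀ * X)⁻¹ * Xᵀ) *ᵥ y) / (A + Dv) := by
    rw [Pmat_const X Dv hX.ne'.isUnit h.ne', smul_mulVec, dotProduct_smul, smul_eq_mul,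
      inv_mul_eq_div]
  rw [LRE, hdetXVX, hdetV, hquad, log_mul (by positivity) (exp_ne_zero _),
    log_mul (by positivity) (by positivity), log_exp, log_rpow (by positivity),
    log_rpow (by positivity), log_mul (by positivity) hX.ne', log_pow, log_inv, log_pow]
  field_simp
  ring

lemma hasDerivAt_log_LRE_const (hX : 0 < (Xᵀ * X).det) (y : Fin m → ℝ) {A : ℝ}
    (h : 0 < A + Dv) :
    HasDerivAt (fun B => log (LRE X (fun _ : Fin m => Dv) y B))
      (-((m - p) / (2 * (A + Dv))) + y ⬝ᵥ ((1 - X * (Xᵀ * X)⁻¹ * Xᵀ) *ᵥ y) / (2 * (A + Dv) ^ 2))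
      A := by
  set c := y ⬝ᵥ ((1 - X * (Xᵀ * X)⁻¹ * Xᵀ) *ᵥ y)
  have hshift : HasDerivAt (fun B : ℝ => B + Dv) 1 A := (hasDerivAt_id A).add_const Dv
  have hlog : HasDerivAt (fun B => (m - p) / 2 * log (B + Dv)) ((m - p) / 2 * (1 / (A + Dv))) A :=
    (hshift.log h.ne').const_mul _
  have hrecip : HasDerivAt (fun B => c * (2 * (B + Dv))⁻¹) (c * (-(2 * 1) / (2 * (A + Dv)) ^ 2))
      A :=
    ((hshift.const_mul 2).inv (by positivity)).const_mul c
  have hformula : HasDerivAt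
      (fun B => -log (Xᵀ * X).det / 2 - (m - p) / 2 * log (B + Dv) - c * (2 * (B + Dv))⁻¹)
      (-((m - p) / (2 * (A + Dv))) + c / (2 * (A + Dv) ^ 2)) A :=
    ((hlog.const_sub _).sub hrecip).congr_deriv (by field_simp; ring)
  refine hformula.congr_of_eventuallyEq ?_
  filter_upwards [Ioi_mem_nhds (show -Dv < A by linarith)] with B hB
  rw [log_LRE_const X Dv hX y (by linarith [Set.mem_Ioi.mp hB]), div_eq_mul_inv c]

end Balanced

theorem nas_estimator_unique_balanced_general {m p : ℕ}
    (X : Matrix (Fin m) (Fin p) ℝ) (hrank : X.rank = p)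
    (D : Fin m → ℝ) (Dv : ℝ) (hDv : 0 < Dv) (hbal : ∀ i, D i = Dv)
    (z : ℝ) (y : Fin m → ℝ)
    (M : Matrix (Fin m) (Fin m) ℝ) (hM : M = 1 - X * (Xᵀ * X)⁻¹ * Xᵀ)
    (hcond : (m : ℝ) > (p : ℝ) + (1 + z ^ 2) / 2) :
    (∃! A : ℝ, 0 < A ∧
      deriv (fun A : ℝ => ((1 + z ^ 2) / 4) * Real.log A + Real.log (LRE X D y A)) A = 0) ∧
    ∀ A : ℝ, 0 < A →
      (deriv (fun A : ℝ => ((1 + z ^ 2) / 4) * Real.log A + Real.log (LRE X D y A)) A = 0 ↔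
        -2 * ((m : ℝ) - p - (1 + z ^ 2) / 2) * A ^ 2
          + 2 * (y ⬝ᵥ (M *ᵥ y) - ((m : ℝ) - p - 1 - z ^ 2) * Dv) * A
          + (1 + z ^ 2) * Dv ^ 2 = 0) := by
  obtain rfl : D = fun _ => Dv := funext hbal
  subst hM
  have hX := det_transpose_mul_self_pos_of_rank_eq_card (by rwa [Fintype.card_fin])
  refine (and_iff_right_of_imp fun hstationary => ?_).2 fun A hA => ?_
  · exact (existsUnique_congr fun A => and_congr_right (hstationary A)).2
      (existsUnique_pos_root_of_neg_of_pos (by nlinarith) (by positivity))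
  · have hADv : 0 < A + Dv := by linarith
    rw [(((hasDerivAt_log hA.ne').const_mul _).fun_add
      (hasDerivAt_log_LRE_const X Dv hX y hADv)).deriv]
    exact score_eq_zero_iff_quadratic hA hADv

/-- Theorem 2(2): uniqueness of the NAS adjusted REML estimator in the balanced case.
If `D_i = D` for all `i` and `m > p + (1+z²)/2`, then the derivative of
`A ↦ ((1+z²)/4)·log A + log L_RE(A)` vanishes at exactly one `A ∈ (0,∞)`, and the
stationary points in `(0,∞)` are exactly the positive roots of the stated quadratic. -/
theorem nas_estimator_unique_balanced {m p : ℕ} (hm : 0 < m) (hp : 0 < p)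
    (X : Matrix (Fin m) (Fin p) ℝ) (hrank : X.rank = p)
    (D : Fin m → ℝ) (Dv : ℝ) (hDv : 0 < Dv) (hbal : ∀ i, D i = Dv)
    (z : ℝ) (y : Fin m → ℝ)
    (M : Matrix (Fin m) (Fin m) ℝ) (hM : M = 1 - X * (Xᵀ * X)⁻¹ * Xᵀ)
    (hcond : (m : ℝ) > (p : ℝ) + (1 + z ^ 2) / 2) :
    (∃! A : ℝ, 0 < A ∧
      deriv (fun A : ℝ => ((1 + z ^ 2) / 4) * Real.log A + Real.log (LRE X D y A)) A = 0) ∧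
    ∀ A : ℝ, 0 < A →
      (deriv (fun A : ℝ => ((1 + z ^ 2) / 4) * Real.log A + Real.log (LRE X D y A)) A = 0 ↔
        -2 * ((m : ℝ) - p - (1 + z ^ 2) / 2) * A ^ 2
          + 2 * (y ⬝ᵥ (M *ᵥ y) - ((m : ℝ) - p - 1 - z ^ 2) * Dv) * A
          + (1 + z ^ 2) * Dv ^ 2 = 0) :=
  nas_estimator_unique_balanced_general X hrank D Dv hDv hbal z y M hM hcond
end

section
/- For every A > 0 and every index i with 1 ≤ i ≤ m, the mean squared error of the BLUP satisfies g_{1i}(A) + g_{2i}(A) ≤ D_i. -/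
/-!
With weights `w j = (A + D j)⁻¹` the matrix `M = XᵀV⁻¹X` is the Gram matrix `Xᵀ diag(w) X`,
and `t = x_iᵀ M⁻¹ x_i` is the weighted leverage of row `i`: for `y = M⁻¹ x_i`,
`t = yᵀ M y = ∑ j, w j (X y)_j² ≥ w i (X y)_i² = w i t²`, so `t ≤ A + D i`.
Then `g₁ + g₂ ≤ A D_i/(A + D_i) + D_i²/(A + D_i) = D_i`.
-/

open Matrix Real

/-- `g_{1i}(A) = A·D_i/(A+D_i)`. -/
noncomputable def g1 {m : ℕ} (D : Fin m → ℝ) (A : ℝ) (i : Fin m) : ℝ :=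
  A * D i / (A + D i)

/-- `g_{2i}(A) = B_i²·x_iᵀ(XᵀV⁻¹X)⁻¹x_i` with `B_i = D_i/(A+D_i)` and `x_i` the
`i`-th row of `X`. -/
noncomputable def g2 {m p : ℕ} (X : Matrix (Fin m) (Fin p) ℝ) (D : Fin m → ℝ)
    (A : ℝ) (i : Fin m) : ℝ :=
  (D i / (A + D i)) ^ 2 * (X i ⬝ᵥ ((Xᵀ * (Vmat D A)⁻¹ * X)⁻¹ *ᵥ X i))

namespace Matrix

variable {ι κ : Type*} [Fintype κ]

theorem mulVec_injective_of_rank_eq_card_s4 {X : Matrix ι κ ℝ} (h : X.rank = Fintype.card κ) :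
    Function.Injective X.mulVec := by
  have hker : Module.finrank ℝ (LinearMap.ker X.mulVecLin) = 0 := by
    have := LinearMap.finrank_range_add_finrank_ker X.mulVecLin
    rw [← rank, h, Module.finrank_fintype_fun_eq_card] at this
    omega
  exact LinearMap.ker_eq_bot.mp (Submodule.finrank_eq_zero.mp hker)

variable [Fintype ι] [DecidableEq ι]

theorem inv_diagonal_of_ne_zero {v : ι → ℝ} (hv : ∀ j, v j ≠ 0) :
    (diagonal v)⁻¹ = diagonal fun j => (v j)⁻¹ := by
  refine inv_eq_right_inv ?_
  rw [diagonal_mul_diagonal, ← diagonal_one]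
  exact congrArg diagonal (funext fun j => mul_inv_cancel₀ (hv j))

theorem posDef_transpose_mul_diagonal_mul {X : Matrix ι κ ℝ} (hX : Function.Injective X.mulVec)
    {w : ι → ℝ} (hw : ∀ j, 0 < w j) : (Xᵀ * diagonal w * X).PosDef := by
  simpa only [conjTranspose_eq_transpose_of_trivial] using
    (posDef_diagonal_iff.mpr hw).conjTranspose_mul_mul_same hX

theorem dotProduct_transpose_mul_diagonal_mul_mulVec (X : Matrix ι κ ℝ) (w : ι → ℝ)
    (v : κ → ℝ) : v ⬝ᵥ ((Xᵀ * diagonal w * X) *ᵥ v) = ∑ j, w j * (X *ᵥ v) j ^ 2 := by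
  rw [Matrix.mul_assoc, ← mulVec_mulVec, ← mulVec_mulVec, dotProduct_mulVec,
    vecMul_transpose, dotProduct, Finset.sum_congr rfl]
  intro j _
  rw [mulVec_diagonal]
  ring

theorem mul_leverage_le_one [DecidableEq κ] (X : Matrix ι κ ℝ) {w : ι → ℝ}
    (hw : ∀ j, 0 ≤ w j) (hM : IsUnit (Xᵀ * diagonal w * X).det) (i : ι) :
    w i * (X i ⬝ᵥ ((Xᵀ * diagonal w * X)⁻¹ *ᵥ X i)) ≤ 1 := by
  set M := Xᵀ * diagonal w * X
  set y := M⁻¹ *ᵥ X i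
  set t := X i ⬝ᵥ y
  have hMy : M *ᵥ y = X i := by
    rw [mulVec_mulVec, mul_nonsing_inv _ hM, one_mulVec]
  have ht : t = ∑ j, w j * (X *ᵥ y) j ^ 2 := by
    rw [← dotProduct_transpose_mul_diagonal_mul_mulVec, hMy, dotProduct_comm]
  have ht_nonneg : 0 ≤ t := ht ▸ Finset.sum_nonneg fun j _ => mul_nonneg (hw j) (sq_nonneg _)
  -- the `i`-th summand is `w i * t ^ 2`, because `(X *ᵥ y) i` is `t` by definition
  have hterm : w i * t ^ 2 ≤ t :=
    (Finset.single_le_sum (f := fun j => w j * (X *ᵥ y) j ^ 2)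
      (fun j _ => mul_nonneg (hw j) (sq_nonneg _)) (Finset.mem_univ i)).trans_eq ht.symm
  rcases ht_nonneg.eq_or_lt with h0 | hpos
  · rw [← h0, mul_zero]
    exact zero_le_one
  · nlinarith

end Matrix

theorem blup_mse_le_general {m p : ℕ}
    (X : Matrix (Fin m) (Fin p) ℝ) (hrank : X.rank = p)
    (D : Fin m → ℝ) (hD : ∀ j, 0 < D j)
    (A : ℝ) (hA : 0 < A) (i : Fin m) :
    g1 D A i + g2 X D A i ≤ D i := by
  have hAD : ∀ j, 0 < A + D j := fun j => add_pos hA (hD j)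
  have hVinv : (Vmat D A)⁻¹ = diagonal fun j => (A + D j)⁻¹ :=
    inv_diagonal_of_ne_zero fun j => (hAD j).ne'
  have hX : Function.Injective X.mulVec :=
    mulVec_injective_of_rank_eq_card_s4 (by rw [hrank, Fintype.card_fin])
  have hM : IsUnit (Xᵀ * (Vmat D A)⁻¹ * X).det := by
    rw [hVinv, ← isUnit_iff_isUnit_det]
    exact (posDef_transpose_mul_diagonal_mul hX fun j => inv_pos.mpr (hAD j)).isUnit
  have hlev : X i ⬝ᵥ ((Xᵀ * (Vmat D A)⁻¹ * X)⁻¹ *ᵥ X i) ≤ A + D i := by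
    have := mul_leverage_le_one X (fun j => (inv_pos.mpr (hAD j)).le) (hVinv ▸ hM) i
    rwa [← hVinv, inv_mul_le_iff₀ (hAD i), mul_one] at this
  calc g1 D A i + g2 X D A i
      ≤ A * D i / (A + D i) + (D i / (A + D i)) ^ 2 * (A + D i) := by
        unfold g1 g2
        gcongr
    _ = D i := by
        field_simp [(hAD i).ne']

/-- The mean squared error of the BLUP is at most the sampling variance:
for every `A > 0` and every `i`, `g_{1i}(A) + g_{2i}(A) ≤ D_i`. -/
theorem blup_mse_le {m p : ℕ} (hm : 0 < m) (hp : 0 < p)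
    (X : Matrix (Fin m) (Fin p) ℝ) (hrank : X.rank = p)
    (D : Fin m → ℝ) (hD : ∀ j, 0 < D j)
    (A : ℝ) (hA : 0 < A) (i : Fin m) :
    g1 D A i + g2 X D A i ≤ D i :=
  blup_mse_le_general X hrank D hD A hA i
end

section
/- Tail decay of the NAS adjusted likelihood. Fix a real number z and y ∈ ℝ^m. If m > p + (1+z²)/2, then A^{(1+z²)/4} · L_RE(A) → 0 as A → ∞; indeed A^{(1+z²)/4} L_RE(A) is bounded above by det(XᵀX)^{−1/2}·A^{(1+z²)/4}·(A+max_i D_i)^{p/2}·(A+min_i D_i)^{−m/2}, which is O(A^{(1+z²)/4 − (m−p)/2}) as A → ∞. -/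
/-! The three factors of `L_RE(A)` are bounded separately. The quadratic form `yᵀ P y` is
nonnegative because `P` is the Schur complement of `W` in the positive semidefinite block matrix
`[X 1]ᵀ W [X 1]` with `W = V⁻¹`, so the exponential is at most `1`. Since `V ≥ (A + D_min)·1`,
`det V ≥ (A + D_min)^m`. Since `(A + D_max)·V⁻¹ ≥ 1`, monotonicity of the determinant on positive
definite matrices gives `(A + D_max)^p · det(XᵀV⁻¹X) ≥ det(XᵀX)`. The resulting bound is a
product of powers of `A`, `A + D_max` and `A + D_min`, hence `O(A^{(1+z²)/4 − (m−p)/2})`, and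
this exponent is negative exactly when `m > p + (1+z²)/2`. -/

open Matrix Real Filter

namespace Matrix

theorem mulVec_injective_of_rank_eq_card_s10 {m n K : Type*} [Fintype n] [Field K]
    (X : Matrix m n K) (hX : X.rank = Fintype.card n) : Function.Injective X.mulVec := by
  have h := LinearMap.finrank_range_add_finrank_ker X.mulVecLin
  rw [← rank, hX, Module.finrank_fintype_fun_eq_card, add_eq_left,
    Submodule.finrank_eq_zero] at h
  exact LinearMap.ker_eq_bot.mp h

variable {m n : Type*} [Fintype m] [Fintype n] [DecidableEq m] [DecidableEq n]

theorem one_le_det_one_add {N : Matrix n n ℝ} (hN : N.PosSemidef) : 1 ≤ (1 + N).det := by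
  rw [hN.1.spectral_theorem, ← map_one (Unitary.conjStarAlgAut ℝ _ hN.1.eigenvectorUnitary),
    ← map_add, Unitary.conjStarAlgAut_apply, det_mul_comm, ← mul_assoc,
    Unitary.coe_star_mul_self, one_mul, ← diagonal_one, diagonal_add, det_diagonal]
  exact Finset.one_le_prod fun i => by simpa using hN.eigenvalues_nonneg i

open scoped MatrixOrder in
theorem PosDef.det_le_det_add {B E : Matrix n n ℝ} (hB : B.PosDef) (hE : E.PosSemidef) :
    B.det ≤ (B + E).det := by
  set R := CFC.sqrt B
  have hRR : R * R = B := CFC.sqrt_mul_sqrt_self B hB.posSemidef.nonneg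
  have hR : IsUnit R.det := by
    rw [← isUnit_iff_isUnit_det]
    exact isUnit_of_mul_isUnit_left (hRR ▸ hB.isUnit)
  have hM : (R⁻¹ * E * R⁻¹).PosSemidef := by
    convert hE.conjTranspose_mul_mul_same R⁻¹ using 3
    exact (nonneg_iff_posSemidef.mp (CFC.sqrt_nonneg B)).isHermitian.inv.eq.symm
  have hconj : B + E = R * (1 + R⁻¹ * E * R⁻¹) * R := by
    rw [mul_add, mul_one, add_mul, hRR, ← mul_assoc, ← mul_assoc, mul_nonsing_inv _ hR, one_mul,
      mul_assoc, nonsing_inv_mul _ hR, mul_one]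
  calc B.det = B.det * 1 := (mul_one _).symm
    _ ≤ B.det * (1 + R⁻¹ * E * R⁻¹).det := by
      gcongr
      exacts [hB.det_pos.le, one_le_det_one_add hM]
    _ = (B + E).det := by rw [hconj, det_mul, det_mul, ← hRR, det_mul]; ring

theorem det_transpose_mul_self_le_pow_mul_det {X : Matrix m n ℝ} (hX : Function.Injective X.mulVec)
    {W : Matrix m m ℝ} {c : ℝ} (hW : (c • W - 1).PosSemidef) :
    (Xᵀ * X).det ≤ c ^ Fintype.card n * (Xᵀ * W * X).det := by
  have hsplit : c • (Xᵀ * W * X) = Xᵀ * X + Xᵀ * (c • W - 1) * X := by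
    rw [Matrix.mul_sub, Matrix.sub_mul, Matrix.mul_one, Matrix.mul_smul, Matrix.smul_mul,
      add_sub_cancel]
  rw [← det_smul, hsplit]
  refine PosDef.det_le_det_add ?_ ?_
  · simpa [conjTranspose_eq_transpose_of_trivial] using PosDef.conjTranspose_mul_self X hX
  · simpa [conjTranspose_eq_transpose_of_trivial] using hW.conjTranspose_mul_mul_same X

open scoped ComplexOrder in
theorem PosDef.posSemidef_sub_mul_mul_inv_mul_mul {𝕜 : Type*} [RCLike 𝕜] {W : Matrix m m 𝕜}
    (hW : W.PosDef) {X : Matrix m n 𝕜} (hX : Function.Injective X.mulVec) :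
    (W - W * X * (Xᴴ * W * X)⁻¹ * Xᴴ * W).PosSemidef := by
  have hS := hW.conjTranspose_mul_mul_same hX
  have := hS.isUnit.invertible
  have hblocks : fromBlocks (Xᴴ * W * X) (Xᴴ * W) (Xᴴ * W)ᴴ W =
      (fromCols X 1)ᴴ * W * fromCols X 1 := by
    rw [conjTranspose_fromCols_eq_fromRows_conjTranspose, fromRows_mul, fromRows_mul_fromCols]
    simp [hW.1.eq, Matrix.mul_assoc]
  have := (hS.fromBlocks₁₁ (Xᴴ * W) W).mp (hblocks ▸ hW.posSemidef.conjTranspose_mul_mul_same _)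
  simpa [hW.1.eq, Matrix.mul_assoc] using this

end Matrix

open Asymptotics Topology

theorem isBigO_add_const_rpow_atTop (c s : ℝ) :
    (fun x : ℝ => (x + c) ^ s) =O[atTop] fun x => x ^ s := by
  have hratio : Tendsto (fun x : ℝ => (x + c) / x) atTop (𝓝 1) := by
    have := ((tendsto_const_nhds (x := c)).div_atTop tendsto_id).const_add 1
    rw [add_zero] at this
    refine this.congr' ?_
    filter_upwards [eventually_ne_atTop 0] with x hx
    rw [add_div, div_self hx, id]
  refine isBigO_of_div_tendsto_nhds ?_ 1 ?_
  · filter_upwards [eventually_gt_atTop 0] with x hx h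
    exact absurd h (rpow_pos_of_pos hx s).ne'
  · refine (one_rpow s ▸ hratio.rpow_const (Or.inl one_ne_zero)).congr' ?_
    filter_upwards [eventually_gt_atTop 0, eventually_gt_atTop (-c)] with x hx hxc
    rw [Pi.div_apply, div_rpow (by linarith) hx.le]

theorem isBigO_const_mul_rpow_mul_add_const_rpow_mul_add_const_rpow_atTop (K a c s d t : ℝ) :
    (fun x : ℝ => K * x ^ a * (x + c) ^ s * (x + d) ^ t) =O[atTop] fun x => x ^ (a + s + t) := by
  refine ((((isBigO_refl (fun x : ℝ => K * x ^ a) atTop).mul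
    (isBigO_add_const_rpow_atTop c s)).mul (isBigO_add_const_rpow_atTop d t)).trans_eventuallyEq
    (g₂ := fun x : ℝ => K * x ^ (a + s + t)) ?_).trans (isBigO_const_mul_self _ _ _)
  filter_upwards [eventually_gt_atTop 0] with x hx
  rw [mul_assoc, mul_assoc, ← rpow_add hx, ← rpow_add hx, add_assoc]

section ResidualLikelihood

variable {m p : ℕ} (X : Matrix (Fin m) (Fin p) ℝ) (D : Fin m → ℝ) {A : ℝ}

theorem inv_Vmat (hd : ∀ i, 0 < A + D i) :
    (Vmat D A)⁻¹ = diagonal fun i => (A + D i)⁻¹ :=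
  inv_eq_right_inv <| by
    rw [Vmat, diagonal_mul_diagonal, ← diagonal_one]
    exact congrArg diagonal (funext fun i => mul_inv_cancel₀ (hd i).ne')

theorem posDef_inv_Vmat (hd : ∀ i, 0 < A + D i) : ((Vmat D A)⁻¹).PosDef := by
  rw [inv_Vmat D hd]
  exact PosDef.diagonal fun i => inv_pos.2 (hd i)

theorem det_Vmat_pos (hd : ∀ i, 0 < A + D i) : 0 < (Vmat D A).det := by
  rw [Vmat, det_diagonal]
  exact Finset.prod_pos fun i _ => hd i

theorem pow_le_det_Vmat {d : ℝ} (hd : 0 ≤ A + d) (hdD : ∀ i, d ≤ D i) :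
    (A + d) ^ m ≤ (Vmat D A).det := by
  rw [Vmat, det_diagonal]
  simpa using Finset.prod_le_prod (s := Finset.univ) (fun _ _ => hd)
    fun i _ => (add_le_add_iff_left A).2 (hdD i)

theorem posDef_transpose_mul_Vmat_inv_mul (hX : Function.Injective X.mulVec)
    (hd : ∀ i, 0 < A + D i) : (Xᵀ * (Vmat D A)⁻¹ * X).PosDef := by
  simpa [conjTranspose_eq_transpose_of_trivial] using
    (posDef_inv_Vmat D hd).conjTranspose_mul_mul_same hX

theorem det_transpose_mul_self_le_pow_mul_det_inv_Vmat (hX : Function.Injective X.mulVec)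
    (hd : ∀ i, 0 < A + D i) {c : ℝ} (hc : ∀ i, D i ≤ c) :
    (Xᵀ * X).det ≤ (A + c) ^ p * (Xᵀ * (Vmat D A)⁻¹ * X).det := by
  simpa using det_transpose_mul_self_le_pow_mul_det hX (c := A + c) (W := (Vmat D A)⁻¹) <| by
    rw [inv_Vmat D hd, ← diagonal_smul, ← diagonal_one, diagonal_sub]
    refine PosSemidef.diagonal fun i => ?_
    have := (one_le_div (hd i)).2 ((add_le_add_iff_left A).2 (hc i))
    simpa only [Pi.zero_apply, smul_eq_mul, ← div_eq_mul_inv, sub_nonneg]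

theorem posSemidef_Pmat (hX : Function.Injective X.mulVec) (hd : ∀ i, 0 < A + D i) :
    (Pmat X D A).PosSemidef := by
  have := (posDef_inv_Vmat D hd).posSemidef_sub_mul_mul_inv_mul_mul hX
  rwa [conjTranspose_eq_transpose_of_trivial] at this

theorem LRE_pos (hX : Function.Injective X.mulVec) (hd : ∀ i, 0 < A + D i) (y : Fin m → ℝ) :
    0 < LRE X D y A := by
  unfold LRE
  have hS := (posDef_transpose_mul_Vmat_inv_mul X D hX hd).det_pos
  have hV := det_Vmat_pos D hd
  positivity

theorem LRE_le (hX : Function.Injective X.mulVec) {Dmin Dmax : ℝ} (hmin : 0 < A + Dmin)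
    (hmax : 0 < A + Dmax) (hDmin : ∀ i, Dmin ≤ D i) (hDmax : ∀ i, D i ≤ Dmax) (y : Fin m → ℝ) :
    LRE X D y A ≤ (Xᵀ * X).det ^ (-(1 : ℝ) / 2) * (A + Dmax) ^ ((p : ℝ) / 2) *
      (A + Dmin) ^ (-(m : ℝ) / 2) := by
  have hd : ∀ i, 0 < A + D i := fun i => by linarith [hDmin i]
  have hXX : 0 < (Xᵀ * X).det := by
    simpa [conjTranspose_eq_transpose_of_trivial] using
      (PosDef.conjTranspose_mul_self X hX).det_pos
  have hSpos := (posDef_transpose_mul_Vmat_inv_mul X D hX hd).det_pos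
  have hVpos := det_Vmat_pos D hd
  have hS : (Xᵀ * (Vmat D A)⁻¹ * X).det ^ (-(1 : ℝ) / 2) ≤
      (Xᵀ * X).det ^ (-(1 : ℝ) / 2) * (A + Dmax) ^ ((p : ℝ) / 2) := by
    have hle : (Xᵀ * X).det * ((A + Dmax) ^ p)⁻¹ ≤ (Xᵀ * (Vmat D A)⁻¹ * X).det := by
      rw [mul_inv_le_iff₀' (by positivity)]
      exact det_transpose_mul_self_le_pow_mul_det_inv_Vmat X D hX hd hDmax
    calc _ ≤ ((Xᵀ * X).det * ((A + Dmax) ^ p)⁻¹) ^ (-(1 : ℝ) / 2) :=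
          rpow_le_rpow_of_nonpos (by positivity) hle (by norm_num)
      _ = _ := by
        rw [mul_rpow hXX.le (by positivity), inv_rpow (by positivity), ← rpow_natCast_mul hmax.le,
          ← rpow_neg hmax.le]
        ring_nf
  have hV : (Vmat D A).det ^ (-(1 : ℝ) / 2) ≤ (A + Dmin) ^ (-(m : ℝ) / 2) := by
    calc _ ≤ ((A + Dmin) ^ m) ^ (-(1 : ℝ) / 2) :=
          rpow_le_rpow_of_nonpos (by positivity) (pow_le_det_Vmat D hmin.le hDmin) (by norm_num)
      _ = _ := by rw [← rpow_natCast_mul hmin.le]; ring_nf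
  have hexp : exp (-(y ⬝ᵥ (Pmat X D A *ᵥ y)) / 2) ≤ 1 := by
    have := (posSemidef_Pmat X D hX hd).dotProduct_mulVec_nonneg y
    rw [star_trivial] at this
    exact exp_le_one_iff.mpr (by linarith)
  unfold LRE
  calc _ ≤ (Xᵀ * (Vmat D A)⁻¹ * X).det ^ (-(1 : ℝ) / 2) * (Vmat D A).det ^ (-(1 : ℝ) / 2) * 1 :=
        by gcongr
    _ ≤ _ := by
        rw [mul_one]
        gcongr

end ResidualLikelihood

theorem nas_adjusted_likelihood_tail_general {m p : ℕ} (hm : 0 < m)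
    (X : Matrix (Fin m) (Fin p) ℝ) (hrank : X.rank = p)
    (D : Fin m → ℝ) (hD : ∀ j, 0 < D j)
    (z : ℝ) (y : Fin m → ℝ)
    (Dmax Dmin : ℝ)
    (hDmax : Dmax =
      Finset.univ.sup' (Finset.univ_nonempty_iff.mpr (Fin.pos_iff_nonempty.mp hm)) D)
    (hDmin : Dmin =
      Finset.univ.inf' (Finset.univ_nonempty_iff.mpr (Fin.pos_iff_nonempty.mp hm)) D)
    (hcond : (m : ℝ) > (p : ℝ) + (1 + z ^ 2) / 2) :
    Filter.Tendsto (fun A : ℝ => A ^ ((1 + z ^ 2) / 4) * LRE X D y A)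
      Filter.atTop (nhds 0) ∧
    (∀ A : ℝ, 0 < A →
      A ^ ((1 + z ^ 2) / 4) * LRE X D y A ≤
        (Xᵀ * X).det ^ (-(1 : ℝ) / 2) * A ^ ((1 + z ^ 2) / 4) *
          (A + Dmax) ^ ((p : ℝ) / 2) * (A + Dmin) ^ (-(m : ℝ) / 2)) ∧
    (fun A : ℝ =>
        (Xᵀ * X).det ^ (-(1 : ℝ) / 2) * A ^ ((1 + z ^ 2) / 4) *
          (A + Dmax) ^ ((p : ℝ) / 2) * (A + Dmin) ^ (-(m : ℝ) / 2))
      =O[Filter.atTop]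
        (fun A : ℝ => A ^ ((1 + z ^ 2) / 4 - ((m : ℝ) - (p : ℝ)) / 2)) := by
  have hX := X.mulVec_injective_of_rank_eq_card_s10 (by rwa [Fintype.card_fin])
  have hDmin_le i : Dmin ≤ D i := hDmin ▸ Finset.inf'_le D (Finset.mem_univ i)
  have hle_Dmax i : D i ≤ Dmax := hDmax ▸ Finset.le_sup' D (Finset.mem_univ i)
  have hDmin_pos : 0 < Dmin := hDmin ▸ (Finset.lt_inf'_iff _).2 fun i _ => hD i
  have hDmax_pos : 0 < Dmax := (hDmin_pos.trans_le (hDmin_le ⟨0, hm⟩)).trans_le (hle_Dmax _)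
  set K := (Xᵀ * X).det ^ (-(1 : ℝ) / 2)
  set a := (1 + z ^ 2) / 4 with ha
  have hbound (A : ℝ) (hA : 0 < A) : A ^ a * LRE X D y A ≤
      K * A ^ a * (A + Dmax) ^ ((p : ℝ) / 2) * (A + Dmin) ^ (-(m : ℝ) / 2) :=
    (mul_le_mul_of_nonneg_left (LRE_le X D hX (by linarith) (by linarith) hDmin_le hle_Dmax y)
      (rpow_nonneg hA.le a)).trans_eq (by ring)
  have hbigO : (fun A : ℝ => K * A ^ a * (A + Dmax) ^ ((p : ℝ) / 2) * (A + Dmin) ^ (-(m : ℝ) / 2))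
      =O[atTop] fun A => A ^ (a - ((m : ℝ) - p) / 2) := by
    convert isBigO_const_mul_rpow_mul_add_const_rpow_mul_add_const_rpow_atTop K a Dmax _ Dmin _
      using 3
    ring
  have hdecay : Tendsto (fun A : ℝ => A ^ (a - ((m : ℝ) - p) / 2)) atTop (𝓝 0) := by
    simpa using tendsto_rpow_neg_atTop (y := ((m : ℝ) - p) / 2 - a) (by rw [ha]; linarith)
  refine ⟨?_, hbound, hbigO⟩
  refine tendsto_of_tendsto_of_tendsto_of_le_of_le' tendsto_const_nhds
    (hbigO.trans_tendsto hdecay) ?_ ?_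
  · filter_upwards [eventually_gt_atTop 0] with A hA
    exact mul_nonneg (rpow_nonneg hA.le _) (LRE_pos X D hX (fun i => by linarith [hD i]) y).le
  · filter_upwards [eventually_gt_atTop 0] with A hA using hbound A hA

/-- Tail decay of the NAS adjusted likelihood: if `m > p + (1+z²)/2`, then
`A^{(1+z²)/4}·L_RE(A) → 0` as `A → ∞`; indeed it is bounded above by
`det(XᵀX)^{−1/2}·A^{(1+z²)/4}·(A+D_max)^{p/2}·(A+D_min)^{−m/2}`, which is
`O(A^{(1+z²)/4 − (m−p)/2})` as `A → ∞`. -/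
theorem nas_adjusted_likelihood_tail {m p : ℕ} (hm : 0 < m) (hp : 0 < p)
    (X : Matrix (Fin m) (Fin p) ℝ) (hrank : X.rank = p)
    (D : Fin m → ℝ) (hD : ∀ j, 0 < D j)
    (z : ℝ) (y : Fin m → ℝ)
    (Dmax Dmin : ℝ)
    (hDmax : Dmax =
      Finset.univ.sup' (Finset.univ_nonempty_iff.mpr (Fin.pos_iff_nonempty.mp hm)) D)
    (hDmin : Dmin =
      Finset.univ.inf' (Finset.univ_nonempty_iff.mpr (Fin.pos_iff_nonempty.mp hm)) D)
    (hcond : (m : ℝ) > (p : ℝ) + (1 + z ^ 2) / 2) :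
    Filter.Tendsto (fun A : ℝ => A ^ ((1 + z ^ 2) / 4) * LRE X D y A)
      Filter.atTop (nhds 0) ∧
    (∀ A : ℝ, 0 < A →
      A ^ ((1 + z ^ 2) / 4) * LRE X D y A ≤
        (Xᵀ * X).det ^ (-(1 : ℝ) / 2) * A ^ ((1 + z ^ 2) / 4) *
          (A + Dmax) ^ ((p : ℝ) / 2) * (A + Dmin) ^ (-(m : ℝ) / 2)) ∧
    (fun A : ℝ =>
        (Xᵀ * X).det ^ (-(1 : ℝ) / 2) * A ^ ((1 + z ^ 2) / 4) *
          (A + Dmax) ^ ((p : ℝ) / 2) * (A + Dmin) ^ (-(m : ℝ) / 2))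
      =O[Filter.atTop]
        (fun A : ℝ => A ^ ((1 + z ^ 2) / 4 - ((m : ℝ) - (p : ℝ)) / 2)) :=
  nas_adjusted_likelihood_tail_general hm X hrank D hD z y Dmax Dmin hDmax hDmin hcond
end
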